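/- arXiv:1709.00580 — 2 statements merged into one kernel-verified Lean document; each statement's English description precedes it below -/
import Mathlib

section
/- Define s(t,θ) = (a₀ + b₀ cosθ) e^{t/2} sin²θ + (a₁ + b₁ e^{-t} cosθ) sin⁴θ. Then s satisfies for all t and θ ∈ (0,π): ∂s/∂t = (1/(4 sinθ)) ∂/∂θ(sinθ ∂s/∂θ) - (3/2) cotθ ∂s/∂θ + ((1+cos²θ)/sin²θ) s. -/
/-!
Writing `c = cos θ`, the operator acts on functions `p (cos θ)`, `p` a polynomial, as
`(1 - c²)/4 · p'' + c · p' + (1 + c²)/(1 - c²) · p`. The four profiles `sin²θ`, `cos θ sin²θ`,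
`sin⁴θ`, `cos θ sin⁴θ` (that is `p = 1 - c²`, `c (1 - c²)`, `(1 - c²)²`, `c (1 - c²)²`) are
eigenfunctions with eigenvalues `1/2`, `1/2`, `0`, `-1`, which are exactly the exponents of the
time factors `e^{t/2}`, `e^{t/2}`, `1`, `e^{-t}`.
-/

open Real Set Polynomial

/-- The operator `Δ̃` of the astigmatism evolution for `λ = 3/2`. -/
noncomputable def hopfLaplacian (f : ℝ → ℝ) (θ : ℝ) : ℝ :=
  1 / (4 * sin θ) * deriv (fun x => sin x * deriv f x) θ
    - 3 / 2 * (cos θ / sin θ) * deriv f θ + (1 + cos θ ^ 2) / sin θ ^ 2 * f θ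

lemma hasDerivAt_eval_cos (p : ℝ[X]) (x : ℝ) :
    HasDerivAt (fun y => p.eval (cos y)) (-sin x * p.derivative.eval (cos x)) x :=
  ((p.hasDerivAt (cos x)).comp x (hasDerivAt_cos x)).congr_deriv (mul_comm _ _)

lemma deriv_eval_cos (p : ℝ[X]) :
    deriv (fun y => p.eval (cos y)) = fun x => -sin x * p.derivative.eval (cos x) :=
  funext fun x => (hasDerivAt_eval_cos p x).deriv

lemma sin_mul_deriv_eval_cos (p : ℝ[X]) :
    (fun x => sin x * deriv (fun y => p.eval (cos y)) x) =
      fun x => (-(1 - X ^ 2) * derivative p).eval (cos x) := by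
  funext x
  simp only [deriv_eval_cos, eval_mul, eval_neg, eval_sub, eval_one, eval_pow, eval_X, ← sin_sq]
  ring

lemma hopfLaplacian_eval_cos (p : ℝ[X]) {θ : ℝ} (hθ : sin θ ≠ 0) :
    hopfLaplacian (fun y => p.eval (cos y)) θ =
      (1 - cos θ ^ 2) / 4 * (derivative (derivative p)).eval (cos θ)
        + cos θ * (derivative p).eval (cos θ)
        + (1 + cos θ ^ 2) / (1 - cos θ ^ 2) * p.eval (cos θ) := by
  rw [hopfLaplacian, sin_mul_deriv_eval_cos, deriv_eval_cos, deriv_eval_cos, ← sin_sq]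
  simp only [derivative_mul, derivative_neg, derivative_sub, derivative_one, derivative_pow,
    derivative_X, eval_add, eval_mul, eval_neg, eval_sub, eval_one, eval_pow, eval_C, eval_X,
    eval_zero]
  field_simp
  rw [sin_sq]
  ring

theorem stmt_13 (a₀ b₀ a₁ b₁ : ℝ) (s : ℝ → ℝ → ℝ)
    (hs : ∀ t θ, s t θ =
      (a₀ + b₀ * Real.cos θ) * Real.exp (t / 2) * Real.sin θ ^ 2 +
        (a₁ + b₁ * Real.exp (-t) * Real.cos θ) * Real.sin θ ^ 4) :
    ∀ (t : ℝ), ∀ θ ∈ Set.Ioo 0 Real.pi,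
      deriv (fun τ => s τ θ) t =
        (1 / (4 * Real.sin θ)) *
            deriv (fun x => Real.sin x * deriv (fun y => s t y) x) θ -
          (3 / 2) * (Real.cos θ / Real.sin θ) * deriv (fun y => s t y) θ +
          ((1 + Real.cos θ ^ 2) / Real.sin θ ^ 2) * s t θ := by
  intro t θ hθ
  have hsin : sin θ ≠ 0 := (sin_pos_of_pos_of_lt_pi hθ.1 hθ.2).ne'
  have hcos : 1 - cos θ ^ 2 ≠ 0 := by rw [← sin_sq]; positivity
  have hst : s t = fun y => ((C a₀ + C b₀ * X) * C (exp (t / 2)) * (1 - X ^ 2)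
      + (C a₁ + C (b₁ * exp (-t)) * X) * (1 - X ^ 2) ^ 2).eval (cos y) := by
    funext y
    simp only [hs, eval_add, eval_mul, eval_sub, eval_one, eval_pow, eval_X, eval_C, ← sin_sq]
    ring
  have hdt : HasDerivAt (fun τ => s τ θ)
      ((a₀ + b₀ * cos θ) * sin θ ^ 2 * (exp (t / 2) * (1 / 2))
        + b₁ * cos θ * sin θ ^ 4 * (exp (-t) * -1)) t := by
    have hsθ : (fun τ => s τ θ) = fun τ => (a₀ + b₀ * cos θ) * sin θ ^ 2 * exp (τ / 2)
        + b₁ * cos θ * sin θ ^ 4 * exp (-τ) + a₁ * sin θ ^ 4 := by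
      funext τ; rw [hs]; ring
    rw [hsθ]
    exact ((((hasDerivAt_id t).div_const 2).exp.const_mul _).add
      ((hasDerivAt_id t).neg.exp.const_mul _)).add_const _
  change _ = hopfLaplacian (s t) θ
  rw [hdt.deriv, hst, hopfLaplacian_eval_cos _ hsin]
  simp only [derivative_add, derivative_mul, derivative_sub, derivative_pow, derivative_C,
    derivative_X, derivative_one, derivative_zero, eval_add, eval_mul, eval_sub, eval_one, eval_pow,
    eval_C, eval_X, eval_zero]
  rw [show sin θ ^ 4 = (sin θ ^ 2) ^ 2 by ring, sin_sq]
  field_simp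
  ring
end

section
/- Fix λ = 3. Then ψ(t,θ) = ψ∞ + (C₃ - 2C₂ t) e^{-t} - 2 C₂ e^{-t} sin²θ and s(t,θ) = C₂ e^{-t} sin²θ solve the linear Hopf flow system ∂ψ/∂t = (1/sinθ) ∂/∂θ(sinθ ∂ψ/∂θ) - 3 cotθ ∂ψ/∂θ - 6 s/sin²θ - ψ + ψ∞ and ∂s/∂t = (1/sinθ) ∂/∂θ(sinθ ∂s/∂θ) - 3 cotθ ∂s/∂θ + ((1+cos²θ)/sin²θ) s. -/
open Real Set

/-! On profiles `a + b sin²θ` the operator `L₃ f = (sin θ f')' / sin θ - 3 cot θ f'` acts as the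
constant `-2b`, because `L_λ (sin²) = 2((2 - λ) cos² - sin²)`. Both `ψ` and `s` are such profiles
with coefficients of the form `(α + β t) e^{-t}`, so the system reduces to the derivative of
`(α + β t) e^{-t}` and the identity `sin² + cos² = 1`. -/

noncomputable def hopfOperator (l : ℝ) (f : ℝ → ℝ) (θ : ℝ) : ℝ :=
  (1 / sin θ) * deriv (fun x => sin x * deriv f x) θ - l * (cos θ / sin θ) * deriv f θ

lemma deriv_const_add_mul_sin_sq (a b x : ℝ) :
    deriv (fun y => a + b * sin y ^ 2) x = 2 * b * sin x * cos x := by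
  have h : HasDerivAt (fun y => a + b * sin y ^ 2) (b * (2 * sin x ^ 1 * cos x)) x :=
    (((hasDerivAt_sin x).pow 2).const_mul b).const_add a
  rw [h.deriv]
  ring

lemma hopfOperator_const_add_mul_sin_sq (l a b : ℝ) {θ : ℝ} (hθ : sin θ ≠ 0) :
    hopfOperator l (fun y => a + b * sin y ^ 2) θ =
      2 * b * ((2 - l) * cos θ ^ 2 - sin θ ^ 2) := by
  have hflux : (fun x => sin x * deriv (fun y => a + b * sin y ^ 2) x) =
      fun x => 2 * b * (sin x ^ 2 * cos x) := by
    funext x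
    rw [deriv_const_add_mul_sin_sq]
    ring
  have h : HasDerivAt (fun x => 2 * b * (sin x ^ 2 * cos x))
      (2 * b * (2 * sin θ ^ 1 * cos θ * cos θ + sin θ ^ 2 * -sin θ)) θ :=
    (((hasDerivAt_sin θ).pow 2).mul (hasDerivAt_cos θ)).const_mul (2 * b)
  rw [hopfOperator, hflux, h.deriv, deriv_const_add_mul_sin_sq]
  field_simp
  ring

lemma hopfOperator_three_const_add_mul_sin_sq (a b : ℝ) {θ : ℝ} (hθ : sin θ ≠ 0) :
    hopfOperator 3 (fun y => a + b * sin y ^ 2) θ = -2 * b := by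
  rw [hopfOperator_const_add_mul_sin_sq 3 a b hθ]
  linear_combination (-2 * b) * sin_sq_add_cos_sq θ

lemma deriv_const_add_affine_mul_exp_neg (c α β t : ℝ) :
    deriv (fun τ => c + (α + β * τ) * exp (-τ)) t = (β - (α + β * t)) * exp (-t) := by
  have hexp : HasDerivAt (fun τ => exp (-τ)) (exp (-t) * (-1)) t := (hasDerivAt_neg t).exp
  have haff : HasDerivAt (fun τ => α + β * τ) (β * 1) t :=
    ((hasDerivAt_id t).const_mul β).const_add α
  have h : HasDerivAt (fun τ => c + (α + β * τ) * exp (-τ))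
      (β * 1 * exp (-t) + (α + β * t) * (exp (-t) * (-1))) t :=
    (haff.mul hexp).const_add c
  rw [h.deriv]
  ring

theorem stmt_15 (ψinf C₂ C₃ : ℝ) (ψ s : ℝ → ℝ → ℝ)
    (hψ : ∀ t θ, ψ t θ = ψinf + (C₃ - 2 * C₂ * t) * Real.exp (-t) -
      2 * C₂ * Real.exp (-t) * Real.sin θ ^ 2)
    (hs : ∀ t θ, s t θ = C₂ * Real.exp (-t) * Real.sin θ ^ 2) :
    ∀ (t : ℝ), ∀ θ ∈ Set.Ioo 0 Real.pi,
      (deriv (fun τ => ψ τ θ) t =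
        (1 / Real.sin θ) * deriv (fun x => Real.sin x * deriv (fun y => ψ t y) x) θ -
          3 * (Real.cos θ / Real.sin θ) * deriv (fun y => ψ t y) θ -
          6 * s t θ / Real.sin θ ^ 2 - ψ t θ + ψinf) ∧
      (deriv (fun τ => s τ θ) t =
        (1 / Real.sin θ) * deriv (fun x => Real.sin x * deriv (fun y => s t y) x) θ -
          3 * (Real.cos θ / Real.sin θ) * deriv (fun y => s t y) θ +
          ((1 + Real.cos θ ^ 2) / Real.sin θ ^ 2) * s t θ) := by
  intro t θ hθ
  have hsin : sin θ ≠ 0 := (sin_pos_of_pos_of_lt_pi hθ.1 hθ.2).ne'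
  have hψ_angle : (fun y => ψ t y) =
      fun y => (ψinf + (C₃ - 2 * C₂ * t) * exp (-t)) + -2 * C₂ * exp (-t) * sin y ^ 2 := by
    funext y; rw [hψ]; ring
  have hs_angle : (fun y => s t y) = fun y => 0 + C₂ * exp (-t) * sin y ^ 2 := by
    funext y; rw [hs]; ring
  have hψ_time : (fun τ => ψ τ θ) =
      fun τ => ψinf + ((C₃ - 2 * C₂ * sin θ ^ 2) + -2 * C₂ * τ) * exp (-τ) := by
    funext τ; rw [hψ]; ring
  have hs_time : (fun τ => s τ θ) = fun τ => 0 + (C₂ * sin θ ^ 2 + 0 * τ) * exp (-τ) := by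
    funext τ; rw [hs]; ring
  change deriv _ t = hopfOperator 3 (fun y => ψ t y) θ - _ - _ + _ ∧
    deriv _ t = hopfOperator 3 (fun y => s t y) θ + _
  rw [hψ_angle, hs_angle, hψ_time, hs_time, hopfOperator_three_const_add_mul_sin_sq _ _ hsin,
    hopfOperator_three_const_add_mul_sin_sq _ _ hsin, deriv_const_add_affine_mul_exp_neg,
    deriv_const_add_affine_mul_exp_neg, hψ, hs]
  constructor
  · field_simp
    ring
  · have hcancel : (1 + cos θ ^ 2) / sin θ ^ 2 * (C₂ * exp (-t) * sin θ ^ 2) =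
        (1 + cos θ ^ 2) * (C₂ * exp (-t)) := by
      field_simp
    rw [hcancel]
    linear_combination (-(C₂ * exp (-t))) * sin_sq_add_cos_sq θ
end
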